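/- Define q : ℕ → ℝ by q(n) = 1 for n ≤ 3, q(4) = 3/10, and q(n) = −1 for n ≥ 5 (the spin does not flip if at most 3 neighbours agree, flips with probability 0.35 if exactly 4 agree, and flips if 5 or more agree). Then Imp(6, q) = 2133/16384 and Imp(6, q) > Q(6) = (1/(2·√6))·(5/6)^{5/2}. Hence for degree D = 6 this one-step soft-threshold local classical algorithm strictly outperforms the optimal one-step QAOA on triangle-free 6-regular graphs. -/
import Mathlib


/-- `Imp D q` is the expected improvement over `1/2`, per edge, of the fraction of
edges cut by the one-step local algorithm on a triangle-free `D`-regular graph with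
flip rule `q`:
`Imp(D,q) = (1/4)·[(∑_{n=0}^{D−1} 2^{−(D−1)}·C(D−1,n)·q(n))²
  − (∑_{n=0}^{D−1} 2^{−(D−1)}·C(D−1,n)·q(n+1))²]`. -/
noncomputable def Imp (D : ℕ) (q : ℕ → ℝ) : ℝ :=
  (1 / 4) * ((∑ n ∈ Finset.range D, ((D - 1).choose n : ℝ) / 2 ^ (D - 1) * q n) ^ 2
    - (∑ n ∈ Finset.range D, ((D - 1).choose n : ℝ) / 2 ^ (D - 1) * q (n + 1)) ^ 2)

/-- With the soft-threshold rule `q(n) = 1` for `n ≤ 3`,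
`q(4) = 3/10`, `q(n) = −1` for `n ≥ 5`, one has `Imp(6, q) = 2133/16384` and
`Imp(6, q) > Q(6) = (1/(2·√6))·(5/6)^(5/2)`.  Hence for degree `D = 6` this one-step
soft-threshold local classical algorithm strictly outperforms the optimal one-step
QAOA on triangle-free 6-regular graphs. -/
theorem stmt16 :
    Imp 6 (fun n => if n ≤ 3 then (1 : ℝ) else if n = 4 then 3 / 10 else -1)
        = 2133 / 16384 ∧
    (2133 / 16384 : ℝ) > (1 / (2 * Real.sqrt 6)) * ((5 : ℝ) / 6) ^ ((5 : ℝ) / 2) := by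
  constructor
  · rw [Imp]
    simp [Finset.sum_range_succ, Nat.choose]
    norm_num
  · have h6 : Real.sqrt 6 > 0 := Real.sqrt_pos.mpr (by norm_num)
    have hR : (0:ℝ) < (1 / (2 * Real.sqrt 6)) * ((5 : ℝ) / 6) ^ ((5 : ℝ) / 2) := by
      apply mul_pos
      · positivity
      · exact Real.rpow_pos_of_pos (by norm_num) _
    have hsq : ((1 / (2 * Real.sqrt 6)) * ((5 : ℝ) / 6) ^ ((5 : ℝ) / 2)) ^ 2
        = 3125 / 186624 := by
      rw [mul_pow, ← Real.rpow_natCast (((5:ℝ)/6) ^ ((5:ℝ)/2)) 2,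
        ← Real.rpow_mul (by norm_num : (0:ℝ) ≤ 5/6)]
      norm_num
      rw [mul_pow, inv_pow, Real.sq_sqrt (by norm_num : (0:ℝ) ≤ 6)]
      norm_num
    nlinarith [hsq, hR, sq_nonneg ((1 / (2 * Real.sqrt 6)) * ((5 : ℝ) / 6) ^ ((5 : ℝ) / 2) - 2133/16384)]
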